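/- Let w₀ be the radial ground state of Δw - w + w^p = 0 in ℝ^N with 1 < p. For a fixed unit vector direction j, the function g(ξ) = ∂_j w₀(ξ) + σ^{-1} ξ^j w₀(ξ) with σ = (p+1)/(p-1) - N/2 ≠ 0 satisfies the orthogonality conditions ∫_{ℝ^N} g ∂_i w₀ dξ = 0 for all i = 1,…,N. -/

import Mathlib

/-!
Pairing the equation `Δw - w + w^p = 0` with `ξ^a ∂_b w` and with `w`, and integrating by parts
(all functions involved are Schwartz), gives the Pohozaev-type identity
`2(p+1) ∫ ∂_a w ∂_b w = δ_ab (p-1) (∑_k ∫ (∂_k w)² + ∫ w²)`,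
so the Gram matrix of the gradient is `c • 1`. Taking its trace determines `c`: `σ c = ½ ∫ w²`.
Since also `∫ ξ^a w ∂_b w = -½ δ_ab ∫ w²`, the two parts of `∫ g ∂_i w` cancel.
-/

open MeasureTheory Real

noncomputable def pd {N : ℕ} (w : (Fin N → ℝ) → ℝ) (j : Fin N) (x : Fin N → ℝ) : ℝ :=
  fderiv ℝ w x (Pi.single j 1)

noncomputable def lap {N : ℕ} (w : (Fin N → ℝ) → ℝ) (x : Fin N → ℝ) : ℝ :=
  ∑ j, pd (pd w j) j x

open SchwartzMap LineDeriv

local notation "∂[" k "] " f:max => (lineDerivOp (Pi.single (M := fun _ => ℝ) k 1) f : 𝓢(_, ℝ))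

local notation "ξ[" a "]" => (ContinuousLinearMap.proj (R := ℝ) (φ := fun _ => ℝ) a)

namespace SchwartzMap

section Calculus

variable {D : Type*} [NormedAddCommGroup D] [NormedSpace ℝ D]

theorem lineDerivOp_smulLeftCLM (ℓ : D →L[ℝ] ℝ) (f : 𝓢(D, ℝ)) (v : D) :
    ∂_{v} (smulLeftCLM ℝ ℓ f) = ℓ v • f + smulLeftCLM ℝ ℓ (∂_{v} f) := by
  ext x
  have h := (ℓ.hasFDerivAt (x := x)).smul (f.hasFDerivAt x)
  have e : ⇑(smulLeftCLM ℝ ℓ f) = ⇑ℓ • ⇑f := smulLeftCLM_apply ℓ.hasTemperateGrowth f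
  rw [lineDerivOp_apply_eq_fderiv, e, h.fderiv]
  simp [smulLeftCLM_apply_apply ℓ.hasTemperateGrowth, lineDerivOp_apply_eq_fderiv]
  ring

theorem lineDerivOp_comm (f : 𝓢(D, ℝ)) (u v : D) : ∂_{u} (∂_{v} f) = ∂_{v} (∂_{u} f) := by
  ext x
  have hsymm := ((f.smooth 2).contDiffAt (x := x)).isSymmSndFDerivAt
    (by simp [minSmoothness_of_isRCLikeNormedField])
  have hsnd : ∀ u v, (∂_{u} (∂_{v} f)) x = fderiv ℝ (fderiv ℝ f) x u v := fun u v => by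
    have h := ((fderivCLM ℝ D ℝ f).hasFDerivAt x).clm_apply (hasFDerivAt_const v x)
    rw [lineDerivOp_apply_eq_fderiv,
      show ⇑(∂_{v} f : 𝓢(D, ℝ)) = fun y => fderivCLM ℝ D ℝ f y v from rfl, h.fderiv]
    simp
    rfl
  rw [hsnd, hsnd, hsymm]

end Calculus

variable {D : Type*} [NormedAddCommGroup D] [NormedSpace ℝ D] [FiniteDimensional ℝ D]
  [MeasureSpace D] [BorelSpace D] [(volume : Measure D).IsAddHaarMeasure]

theorem integrable_mul (f g : 𝓢(D, ℝ)) : Integrable (fun x => f x * g x) :=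
  (pairing (ContinuousLinearMap.mul ℝ ℝ) f g).integrable

variable (D) in
/-- Bundled as a bilinear form so that integrals of sums split without integrability side goals. -/
noncomputable def integralMul : 𝓢(D, ℝ) →ₗ[ℝ] 𝓢(D, ℝ) →ₗ[ℝ] ℝ :=
  LinearMap.mk₂ ℝ (fun f g => ∫ x, f x * g x)
    (fun f₁ f₂ g => by
      simp only [add_apply, add_mul]; exact integral_add (integrable_mul _ _) (integrable_mul _ _))
    (fun c f g => by simp only [smul_apply, smul_eq_mul, mul_assoc]; exact integral_const_mul _ _)
    (fun f g₁ g₂ => by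
      simp only [add_apply, mul_add]; exact integral_add (integrable_mul _ _) (integrable_mul _ _))
    (fun c f g => by
      simp only [smul_apply, smul_eq_mul, mul_left_comm _ c]; exact integral_const_mul _ _)

theorem integralMul_apply (f g : 𝓢(D, ℝ)) : integralMul D f g = ∫ x, f x * g x := rfl

theorem integralMul_comm (f g : 𝓢(D, ℝ)) : integralMul D f g = integralMul D g f := by
  simp only [integralMul_apply, mul_comm]

theorem integralMul_smulLeftCLM_comm (ℓ : D →L[ℝ] ℝ) (f g : 𝓢(D, ℝ)) :
    integralMul D (smulLeftCLM ℝ ℓ f) g = integralMul D f (smulLeftCLM ℝ ℓ g) := by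
  simp only [integralMul_apply, smulLeftCLM_apply_apply ℓ.hasTemperateGrowth, smul_eq_mul]
  congr 1; ext x; ring

theorem integralMul_lineDerivOp_right (f g : 𝓢(D, ℝ)) (v : D) :
    integralMul D f (∂_{v} g) = -integralMul D (∂_{v} f) g :=
  integral_mul_lineDerivOp_right_eq_neg_left f g v

theorem integralMul_smulLeftCLM_lineDerivOp_self (ℓ : D →L[ℝ] ℝ) (f : 𝓢(D, ℝ)) (v : D) :
    integralMul D (smulLeftCLM ℝ ℓ f) (∂_{v} f) = -(ℓ v / 2 * integralMul D f f) := by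
  have h := integralMul_lineDerivOp_right (smulLeftCLM ℝ ℓ f) f v
  have hswap : integralMul D (smulLeftCLM ℝ ℓ (∂_{v} f)) f
      = integralMul D (smulLeftCLM ℝ ℓ f) (∂_{v} f) := by
    rw [integralMul_smulLeftCLM_comm, integralMul_comm]
  rw [lineDerivOp_smulLeftCLM, map_add, map_smul, LinearMap.add_apply, LinearMap.smul_apply,
    smul_eq_mul, hswap] at h
  linarith

theorem integralMul_lineDerivOp_lineDerivOp_smulLeftCLM (ℓ : D →L[ℝ] ℝ) (w : 𝓢(D, ℝ))
    (u v : D) :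
    integralMul D (∂_{u} (∂_{u} w)) (smulLeftCLM ℝ ℓ (∂_{v} w))
      = ℓ v / 2 * integralMul D (∂_{u} w) (∂_{u} w) - ℓ u * integralMul D (∂_{u} w) (∂_{v} w) := by
  rw [integralMul_comm, integralMul_lineDerivOp_right, lineDerivOp_smulLeftCLM, lineDerivOp_comm,
    map_add, map_smul, LinearMap.add_apply, LinearMap.smul_apply, smul_eq_mul,
    integralMul_smulLeftCLM_comm, integralMul_comm (∂_{v} (∂_{u} w)),
    integralMul_smulLeftCLM_lineDerivOp_self, integralMul_comm (∂_{v} w)]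
  ring

theorem integralMul_smulLeftCLM_lineDerivOp_of_eq_rpow (ℓ : D →L[ℝ] ℝ) {w φ : 𝓢(D, ℝ)} (v : D)
    {p : ℝ} (hp : 0 ≤ p) (hφ : ∀ x, φ x = w x ^ p) :
    (p + 1) * integralMul D (smulLeftCLM ℝ ℓ φ) (∂_{v} w) = -(ℓ v * integralMul D φ w) := by
  have hpow : ∀ x, φ x * w x = w x ^ (p + 1) := fun x => by
    rcases eq_or_ne (w x) 0 with h | h
    · rw [hφ, h, rpow_add_one' le_rfl (by linarith)]
    · rw [hφ, rpow_add_one h]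
  have hderiv : ∀ x, HasLineDerivAt ℝ (fun y => φ y * w y) ((p + 1) * φ x * ∂_{v} w x) x v := by
    intro x
    have h := ((w.hasFDerivAt x).rpow_const (p := p + 1) (Or.inr (by linarith))).hasLineDerivAt v
    rw [show (fun y => φ y * w y) = fun y => w y ^ (p + 1) from funext hpow]
    simpa [hφ, lineDerivOp_apply_eq_fderiv, mul_assoc] using h
  have key := integral_bilinear_hasLineDerivAt_right_eq_neg_left_of_integrable
    (B := ContinuousLinearMap.mul ℝ ℝ) (μ := volume) (f := ℓ) (f' := fun _ => ℓ v)
    (g := fun y => φ y * w y) (g' := fun x => (p + 1) * φ x * ∂_{v} w x) (v := v)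
    ?_ ?_ ?_ (fun x _ => (ℓ.hasFDerivAt (x := x)).hasLineDerivAt v) (fun x _ => hderiv x)
  · calc (p + 1) * integralMul D (smulLeftCLM ℝ ℓ φ) (∂_{v} w)
        = ∫ x, ℓ x * ((p + 1) * φ x * ∂_{v} w x) := by
          rw [integralMul_apply, ← integral_const_mul]
          congr 1; ext x
          simp only [smulLeftCLM_apply_apply ℓ.hasTemperateGrowth, smul_eq_mul]; ring
      _ = -(ℓ v * integralMul D φ w) := by
          simpa [integral_const_mul, integralMul_apply] using key
  · simpa using (integrable_mul φ w).const_mul (ℓ v)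
  · refine ((integrable_mul (smulLeftCLM ℝ ℓ φ) (∂_{v} w)).const_mul (p + 1)).congr
      (ae_of_all _ fun x => ?_)
    simp only [smulLeftCLM_apply_apply ℓ.hasTemperateGrowth, smul_eq_mul,
      ContinuousLinearMap.mul_apply']
    ring
  · refine (integrable_mul (smulLeftCLM ℝ ℓ φ) w).congr (ae_of_all _ fun x => ?_)
    simp only [smulLeftCLM_apply_apply ℓ.hasTemperateGrowth, smul_eq_mul,
      ContinuousLinearMap.mul_apply']
    ring

section Coordinates

variable {N : ℕ}

theorem coe_lineDerivOp_single (f : 𝓢(Fin N → ℝ, ℝ)) (k : Fin N) :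
    ⇑(∂[k] f) = pd ⇑f k := rfl

noncomputable def coordLaplacian (f : 𝓢(Fin N → ℝ, ℝ)) : 𝓢(Fin N → ℝ, ℝ) :=
  ∑ k : Fin N, ∂[k] (∂[k] f)

theorem coordLaplacian_apply (f : 𝓢(Fin N → ℝ, ℝ)) (x : Fin N → ℝ) :
    coordLaplacian f x = lap ⇑f x := by
  simp [coordLaplacian, lap, ← coe_lineDerivOp_single]

theorem integralMul_coordLaplacian_self (w : 𝓢(Fin N → ℝ, ℝ)) :
    integralMul _ (coordLaplacian w) w = -∑ k : Fin N, integralMul _ (∂[k] w) (∂[k] w) := by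
  simp only [coordLaplacian, map_sum, LinearMap.sum_apply, ← Finset.sum_neg_distrib]
  refine Finset.sum_congr rfl fun k _ => ?_
  rw [integralMul_comm, integralMul_lineDerivOp_right, integralMul_comm]

theorem integralMul_coordLaplacian_smulLeftCLM_proj (w : 𝓢(Fin N → ℝ, ℝ)) (a b : Fin N) :
    integralMul _ (coordLaplacian w) (smulLeftCLM ℝ ξ[a] (∂[b] w))
      = (Pi.single b 1 : Fin N → ℝ) a / 2 * ∑ k : Fin N, integralMul _ (∂[k] w) (∂[k] w)
        - integralMul _ (∂[a] w) (∂[b] w) := by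
  simp only [coordLaplacian, map_sum, LinearMap.sum_apply,
    integralMul_lineDerivOp_lineDerivOp_smulLeftCLM, Finset.sum_sub_distrib, Finset.mul_sum]
  congr 1
  simp [Pi.single_apply]

/-- The equation paired with `ξ^a ∂_b w`: the linear terms are handled by integration by parts,
the nonlinear one through `w^p ∂_b w = ∂_b (w^(p+1)) / (p+1)`. -/
theorem pohozaev (w : 𝓢(Fin N → ℝ, ℝ)) {p : ℝ} (hp : 0 ≤ p)
    (hsol : ∀ x, lap (⇑w) x - w x + w x ^ p = 0) (a b : Fin N) :
    2 * (p + 1) * integralMul _ (∂[a] w) (∂[b] w)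
      = (Pi.single b 1 : Fin N → ℝ) a * ((p - 1) *
          (∑ k : Fin N, integralMul _ (∂[k] w) (∂[k] w) + integralMul _ w w)) := by
  set φ := w - coordLaplacian w
  have hφ : ∀ x, φ x = w x ^ p := fun x => by
    simp only [φ, sub_apply, coordLaplacian_apply]; linarith [hsol x]
  have hnonlin := integralMul_smulLeftCLM_lineDerivOp_of_eq_rpow ξ[a] (Pi.single b 1) hp hφ
  rw [integralMul_smulLeftCLM_comm, map_sub] at hnonlin
  simp only [LinearMap.sub_apply] at hnonlin
  rw [← integralMul_smulLeftCLM_comm, integralMul_smulLeftCLM_lineDerivOp_self,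
    integralMul_coordLaplacian_smulLeftCLM_proj, integralMul_coordLaplacian_self] at hnonlin
  simp only [ContinuousLinearMap.proj_apply] at hnonlin
  linear_combination 2 * hnonlin

theorem gram_eq_of_pohozaev (w : 𝓢(Fin N → ℝ, ℝ)) {p : ℝ} (hp : 0 ≤ p)
    (hsol : ∀ x, lap (⇑w) x - w x + w x ^ p = 0) (a b : Fin N) :
    (2 * (p + 1) - N * (p - 1)) * integralMul _ (∂[a] w) (∂[b] w)
      = (Pi.single b 1 : Fin N → ℝ) a * ((p - 1) * integralMul _ w w) := by
  set S := ∑ k : Fin N, integralMul _ (∂[k] w) (∂[k] w)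
  have htrace : 2 * (p + 1) * S = N * ((p - 1) * (S + integralMul _ w w)) := by
    rw [Finset.mul_sum]
    calc ∑ k : Fin N, 2 * (p + 1) * integralMul _ (∂[k] w) (∂[k] w)
        = ∑ _k : Fin N, (p - 1) * (S + integralMul _ w w) :=
          Finset.sum_congr rfl fun k _ => by rw [pohozaev w hp hsol, Pi.single_eq_same, one_mul]
      _ = N * ((p - 1) * (S + integralMul _ w w)) := by simp
  refine mul_left_cancel₀ (by positivity : (2 * (p + 1) : ℝ) ≠ 0) ?_
  linear_combination (2 * (p + 1) - N * (p - 1)) * pohozaev w hp hsol a b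
    + (Pi.single b 1 : Fin N → ℝ) a * (p - 1) * htrace

end Coordinates

end SchwartzMap

theorem stmt_19_general {N : ℕ} (p : ℝ) (hp : 1 < p)
    (w₀ : SchwartzMap (Fin N → ℝ) ℝ)
    (hsol : ∀ x, lap (⇑w₀) x - w₀ x + w₀ x ^ p = 0)
    (σ : ℝ) (hσdef : σ = (p + 1) / (p - 1) - (N : ℝ) / 2) (hσ : σ ≠ 0) (j : Fin N) :
    ∀ i : Fin N, ∫ x, (pd (⇑w₀) j x + σ⁻¹ * x j * w₀ x) * pd (⇑w₀) i x = 0 := by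
  intro i
  have hp1 : p - 1 ≠ 0 := by linarith
  have hgram := gram_eq_of_pohozaev w₀ (by linarith) hsol j i
  rw [show 2 * (p + 1) - N * (p - 1) = 2 * (p - 1) * σ by rw [hσdef]; field_simp] at hgram
  have hσM : σ * integralMul _ (∂[j] w₀) (∂[i] w₀)
      = (Pi.single i 1 : Fin N → ℝ) j / 2 * integralMul _ w₀ w₀ :=
    mul_left_cancel₀ hp1 (by linear_combination hgram / 2)
  have hint : ∫ x, (pd (⇑w₀) j x + σ⁻¹ * x j * w₀ x) * pd (⇑w₀) i x
      = integralMul _ (∂[j] w₀ + σ⁻¹ • smulLeftCLM ℝ ξ[j] w₀) (∂[i] w₀) := by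
    rw [integralMul_apply]
    congr 1; ext x
    simp only [add_apply, smul_apply, smul_eq_mul, coe_lineDerivOp_single,
      smulLeftCLM_apply_apply ξ[j].hasTemperateGrowth, ContinuousLinearMap.proj_apply]
    ring
  rw [hint, map_add, map_smul, LinearMap.add_apply, LinearMap.smul_apply, smul_eq_mul,
    integralMul_smulLeftCLM_lineDerivOp_self, ContinuousLinearMap.proj_apply, ← hσM, mul_neg,
    inv_mul_cancel_left₀ hσ, add_neg_cancel]

/-- Solvability (orthogonality) condition: for the radial ground state `w₀` of
`Δw - w + w^p = 0` and `σ = (p+1)/(p-1) - N/2 ≠ 0`, the function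
`g = ∂_j w₀ + σ⁻¹ ξ^j w₀` satisfies `∫ g ∂_i w₀ = 0` for all `i`. -/
theorem stmt_19 {N : ℕ} (hN : 0 < N) (p : ℝ) (hp : 1 < p)
    (w₀ : SchwartzMap (Fin N → ℝ) ℝ) (hpos : ∀ x, 0 < w₀ x)
    (hrad : ∀ x y : Fin N → ℝ, ‖x‖ = ‖y‖ → w₀ x = w₀ y)
    (hsol : ∀ x, lap (⇑w₀) x - w₀ x + w₀ x ^ p = 0)
    (σ : ℝ) (hσdef : σ = (p + 1) / (p - 1) - (N : ℝ) / 2) (hσ : σ ≠ 0) (j : Fin N) :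
    ∀ i : Fin N, ∫ x, (pd (⇑w₀) j x + σ⁻¹ * x j * w₀ x) * pd (⇑w₀) i x = 0 :=
  stmt_19_general p hp w₀ hsol σ hσdef hσ j
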